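/- (Nagy's inequality) Let a_1, …, a_r be real numbers with maximum M and minimum m. Then the variance (1/r)∑(a_i − ā)², where ā = (1/r)∑ a_i, is at least (M − m)²/(2r). -/

import Mathlib

open Matrix BigOperators

noncomputable def frob {m n : ℕ} (A : Matrix (Fin m) (Fin n) ℝ) : ℝ :=
  Real.sqrt (∑ i, ∑ j, (A i j) ^ 2)

noncomputable def finner {m n : ℕ} (A B : Matrix (Fin m) (Fin n) ℝ) : ℝ :=
  (Bᵀ * A).trace

noncomputable def Rreg {r : ℕ} (S : Matrix (Fin r) (Fin r) ℝ) : ℝ :=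
  frob (Sᵀ * S - ((frob S) ^ 2 / (r : ℝ)) • 1)

noncomputable def sv {r : ℕ} (S : Matrix (Fin r) (Fin r) ℝ) (i : Fin r) : ℝ :=
  Real.sqrt ((Matrix.isHermitian_iff_isSymm.mpr (Matrix.isSymm_transpose_mul_self S)).eigenvalues i)

noncomputable def gradR {r : ℕ} (S : Matrix (Fin r) (Fin r) ℝ) : Matrix (Fin r) (Fin r) ℝ :=
  (2 / Rreg S) • (S * (Sᵀ * S - ((frob S) ^ 2 / (r : ℝ)) • 1))

/-! Dropping all terms of the sum of squared deviations except those at a maximum and a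
minimum leaves `(M - ā)² + (m - ā)²`, which is at least `(M - m)² / 2` for any centre `ā`. -/

section

variable {α : Type*} [Field α] [LinearOrder α] [IsStrictOrderedRing α]

theorem sq_sub_le_two_mul_add_sq_sub (x y c : α) :
    (x - y) ^ 2 ≤ 2 * ((x - c) ^ 2 + (y - c) ^ 2) := by
  nlinarith [sq_nonneg (x + y - 2 * c)]

theorem sq_sub_le_two_mul_sum_sq_sub {ι : Type*} [Fintype ι] (f : ι → α) (c : α) (i j : ι) :
    (f i - f j) ^ 2 ≤ 2 * ∑ k, (f k - c) ^ 2 := by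
  classical
  rcases eq_or_ne i j with rfl | hij
  · rw [sub_self, zero_pow two_ne_zero]
    positivity
  calc (f i - f j) ^ 2 ≤ 2 * ((f i - c) ^ 2 + (f j - c) ^ 2) := sq_sub_le_two_mul_add_sq_sub _ _ _
    _ = 2 * ∑ k ∈ {i, j}, (f k - c) ^ 2 := by rw [Finset.sum_pair hij]
    _ ≤ 2 * ∑ k, (f k - c) ^ 2 := by
      gcongr
      exact Finset.subset_univ _

end

theorem stmt7_general {r : ℕ} (a : Fin r → ℝ) (M m : ℝ)
    (hM : IsGreatest (Set.range a) M) (hm : IsLeast (Set.range a) m) :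
    (M - m) ^ 2 / (2 * (r : ℝ))
      ≤ (1 / (r : ℝ)) * ∑ i, (a i - (1 / (r : ℝ)) * ∑ j, a j) ^ 2 := by
  obtain ⟨⟨i, rfl⟩, -⟩ := hM
  obtain ⟨⟨j, rfl⟩, -⟩ := hm
  have hspread := sq_sub_le_two_mul_sum_sq_sub a ((1 / (r : ℝ)) * ∑ j, a j) i j
  calc (a i - a j) ^ 2 / (2 * (r : ℝ)) = 1 / (r : ℝ) * ((a i - a j) ^ 2 / 2) := by ring
    _ ≤ _ := by gcongr; linarith

theorem stmt7 {r : ℕ} (hr : 0 < r) (a : Fin r → ℝ) (M m : ℝ)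
    (hM : IsGreatest (Set.range a) M) (hm : IsLeast (Set.range a) m) :
    (M - m) ^ 2 / (2 * (r : ℝ))
      ≤ (1 / (r : ℝ)) * ∑ i, (a i - (1 / (r : ℝ)) * ∑ j, a j) ^ 2 :=
  stmt7_general a M m hM hm
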